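/- Let r ∈ (0,∞) and let μ be a Borel probability measure on ℝ^q with compact support K. Then D̲_r(μ) ≤ lower box dimension of K and D̄_r(μ) ≤ upper box dimension of K, where for ε > 0, N(K,ε) denotes the minimal number of closed balls of radius ε needed to cover K, the lower box dimension of K is liminf_{ε→0} log N(K,ε)/(−log ε), and the upper box dimension of K is limsup_{ε→0} log N(K,ε)/(−log ε). -/

import Mathlib

/-!
If `N(K, ε) ≤ n`, the centres of a minimal `ε`-cover of `K` form an `n`-point quantizer, and since
`μ` lives on `K` its error is at most `ε`: `e_{n,r}(μ) ≤ ε`. Hence `log n / (-log e_{n,r})` is at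
most `log n / (-log ε)` for any such `ε`. If `N(K, ε) < ε ^ (-s)` for all small `ε`, taking
`ε = n ^ (-1 / s)` bounds the upper quantization dimension by `s`; if this holds only along some
`ε → 0`, taking `n = max m N(K, ε)` there bounds the lower one. The Euclidean structure is used
only to make `log N(K, ε) / (-log ε)` bounded (by a cubic grid), without which the real
`limsup`/`liminf` defining the box dimensions would be junk values.
-/

open MeasureTheory Filter Metric
open scoped ENNReal NNReal

/-- The `n`-th quantization error of order `r` for a measure `P`:
`e_{n,r}(P) = inf { (∫ d(x,α)^r dP)^{1/r} : α ⊆ E, 1 ≤ card α ≤ n }`. -/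
noncomputable def quantError {E : Type*} [MetricSpace E] [MeasurableSpace E]
    (P : Measure E) (r : ℝ) (n : ℕ) : ℝ :=
  sInf {e : ℝ | ∃ α : Finset E, 1 ≤ α.card ∧ α.card ≤ n ∧
    e = (∫ x, infDist x (↑α : Set E) ^ r ∂P) ^ (1 / r)}

/-- The upper quantization dimension of order `r`. -/
noncomputable def upperQuantDim {E : Type*} [MetricSpace E] [MeasurableSpace E]
    (P : Measure E) (r : ℝ) : ℝ :=
  limsup (fun n : ℕ => Real.log n / (- Real.log (quantError P r n))) atTop

/-- The lower quantization dimension of order `r`. -/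
noncomputable def lowerQuantDim {E : Type*} [MetricSpace E] [MeasurableSpace E]
    (P : Measure E) (r : ℝ) : ℝ :=
  liminf (fun n : ℕ => Real.log n / (- Real.log (quantError P r n))) atTop

/-- The `s`-dimensional upper quantization coefficient of order `r`. -/
noncomputable def upperQuantCoeff {E : Type*} [MetricSpace E] [MeasurableSpace E]
    (P : Measure E) (r s : ℝ) : ℝ≥0∞ :=
  limsup (fun n : ℕ => ENNReal.ofReal ((n : ℝ) ^ (1 / s) * quantError P r n)) atTop

/-- The `s`-dimensional lower quantization coefficient of order `r`. -/
noncomputable def lowerQuantCoeff {E : Type*} [MetricSpace E] [MeasurableSpace E]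
    (P : Measure E) (r s : ℝ) : ℝ≥0∞ :=
  liminf (fun n : ℕ => ENNReal.ofReal ((n : ℝ) ^ (1 / s) * quantError P r n)) atTop

/-- `N(K,ε)`: the minimal number of closed balls of radius `ε` needed to cover `K`. -/
noncomputable def coverNum {E : Type*} [MetricSpace E] (K : Set E) (ε : ℝ) : ℕ :=
  sInf {n : ℕ | ∃ t : Finset E, t.card ≤ n ∧ K ⊆ ⋃ x ∈ t, closedBall x ε}

/-- The lower box (Minkowski) dimension `liminf_{ε→0⁺} log N(K,ε)/(-log ε)`. -/
noncomputable def lowerBoxDim {E : Type*} [MetricSpace E] (K : Set E) : ℝ :=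
  liminf (fun ε : ℝ => Real.log (coverNum K ε) / (- Real.log ε)) (nhdsWithin 0 (Set.Ioi 0))

/-- The upper box (Minkowski) dimension `limsup_{ε→0⁺} log N(K,ε)/(-log ε)`. -/
noncomputable def upperBoxDim {E : Type*} [MetricSpace E] (K : Set E) : ℝ :=
  limsup (fun ε : ℝ => Real.log (coverNum K ε) / (- Real.log ε)) (nhdsWithin 0 (Set.Ioi 0))

open Topology

section CoverNum

variable {E : Type*} [MetricSpace E] {K : Set E} {ε : ℝ}

theorem coverNum_le_card (t : Finset E) (ht : K ⊆ ⋃ x ∈ t, closedBall x ε) :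
    coverNum K ε ≤ t.card :=
  Nat.sInf_le ⟨t, le_rfl, ht⟩

theorem exists_finset_card_le_coverNum (hK : IsCompact K) (hε : 0 < ε) :
    ∃ t : Finset E, t.card ≤ coverNum K ε ∧ K ⊆ ⋃ x ∈ t, closedBall x ε := by
  obtain ⟨t, ht⟩ := hK.elim_finite_subcover (fun x : E => ball x ε) (fun _ => isOpen_ball)
    fun x _ => Set.mem_iUnion.2 ⟨x, mem_ball_self hε⟩
  have hcover : K ⊆ ⋃ x ∈ t, closedBall x ε :=
    ht.trans (Set.iUnion₂_mono fun x _ => ball_subset_closedBall)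
  exact Nat.sInf_mem (s := {n | ∃ t : Finset E, t.card ≤ n ∧ K ⊆ ⋃ x ∈ t, closedBall x ε})
    ⟨t.card, t, le_rfl, hcover⟩

theorem Finset.nonempty_of_subset_iUnion_closedBall {t : Finset E}
    (hK : K.Nonempty) (ht : K ⊆ ⋃ x ∈ t, closedBall x ε) : t.Nonempty := by
  obtain ⟨x, hx⟩ := hK
  obtain ⟨y, hy, -⟩ := Set.mem_iUnion₂.1 (ht hx)
  exact ⟨y, hy⟩

theorem one_le_coverNum (hK : IsCompact K) (hne : K.Nonempty) (hε : 0 < ε) :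
    1 ≤ coverNum K ε := by
  obtain ⟨t, htK, ht⟩ := exists_finset_card_le_coverNum hK hε
  exact (Finset.nonempty_of_subset_iUnion_closedBall hne ht).card_pos.trans_le htK

theorem eventually_log_coverNum_div_neg_log_nonneg (hK : IsCompact K) (hne : K.Nonempty) :
    ∀ᶠ ε in 𝓝[>] (0 : ℝ), 0 ≤ Real.log (coverNum K ε) / -Real.log ε := by
  filter_upwards [Ioo_mem_nhdsGT one_pos] with ε ⟨hε0, hε1⟩
  have hN : (1 : ℝ) ≤ coverNum K ε := by exact_mod_cast one_le_coverNum hK hne hε0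
  exact div_nonneg (Real.log_nonneg hN) (neg_nonneg.2 (Real.log_nonpos hε0.le hε1.le))

end CoverNum

theorem nonempty_of_measure_compl_eq_zero {E : Type*} [MeasurableSpace E] (P : Measure E)
    [IsProbabilityMeasure P] {K : Set E} (hPK : P Kᶜ = 0) : K.Nonempty :=
  Set.nonempty_iff_ne_empty.2 fun h => by simp [h] at hPK

section QuantError

variable {E : Type*} [MetricSpace E] [MeasurableSpace E] (P : Measure E)

theorem integral_infDist_rpow_nonneg (s : Set E) (r : ℝ) : 0 ≤ ∫ x, infDist x s ^ r ∂P :=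
  integral_nonneg fun _ => Real.rpow_nonneg infDist_nonneg r

theorem quantError_nonneg (r : ℝ) (n : ℕ) : 0 ≤ quantError P r n :=
  Real.sInf_nonneg fun _ ⟨α, _, _, he⟩ =>
    he ▸ Real.rpow_nonneg (integral_infDist_rpow_nonneg P α r) _

theorem quantError_le_of_subset_iUnion_closedBall [IsProbabilityMeasure P] {r : ℝ} (hr : 0 < r)
    {K : Set E} (hPK : P Kᶜ = 0) {ε : ℝ} (hε : 0 < ε) {n : ℕ} {t : Finset E}
    (ht : t.Nonempty) (htn : t.card ≤ n) (hKt : K ⊆ ⋃ x ∈ t, closedBall x ε) :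
    quantError P r n ≤ ε := by
  have hdist : ∀ᵐ x ∂P, ‖infDist x (t : Set E) ^ r‖ ≤ ε ^ r := by
    filter_upwards [measure_eq_zero_iff_ae_notMem.1 hPK] with x hx
    obtain ⟨y, hy, hxy⟩ := Set.mem_iUnion₂.1 (hKt (not_not.1 hx))
    rw [Real.norm_of_nonneg (Real.rpow_nonneg infDist_nonneg r)]
    exact Real.rpow_le_rpow infDist_nonneg ((infDist_le_dist_of_mem hy).trans hxy) hr.le
  have hint : ∫ x, infDist x (t : Set E) ^ r ∂P ≤ ε ^ r := by
    simpa using (le_abs_self _).trans (norm_integral_le_of_norm_le_const hdist)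
  calc quantError P r n ≤ (∫ x, infDist x (t : Set E) ^ r ∂P) ^ (1 / r) :=
        csInf_le ⟨0, fun _ ⟨α, _, _, he⟩ =>
          he ▸ Real.rpow_nonneg (integral_infDist_rpow_nonneg P α r) _⟩
          ⟨t, ht.card_pos, htn, rfl⟩
    _ ≤ (ε ^ r) ^ (1 / r) := by gcongr; exact integral_infDist_rpow_nonneg P _ r
    _ = ε := by rw [one_div, Real.rpow_rpow_inv hε.le hr.ne']

theorem quantError_le_of_coverNum_le [IsProbabilityMeasure P] {r : ℝ} (hr : 0 < r) {K : Set E}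
    (hK : IsCompact K) (hPK : P Kᶜ = 0) {ε : ℝ} (hε : 0 < ε) {n : ℕ}
    (hn : coverNum K ε ≤ n) : quantError P r n ≤ ε := by
  have hne := nonempty_of_measure_compl_eq_zero P hPK
  obtain ⟨t, htK, hKt⟩ := exists_finset_card_le_coverNum hK hε
  exact quantError_le_of_subset_iUnion_closedBall P hr hPK hε
    (Finset.nonempty_of_subset_iUnion_closedBall hne hKt) (htK.trans hn) hKt

end QuantError

theorem div_neg_log_le_div_neg_log {a b c : ℝ} (hc : 0 ≤ c) (ha : 0 ≤ a) (hab : a ≤ b)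
    (hb : b < 1) : c / -Real.log a ≤ c / -Real.log b := by
  rcases ha.eq_or_lt with rfl | ha
  · simpa using div_nonneg hc (neg_nonneg.2 (Real.log_nonpos (ha.trans hab) hb.le))
  · exact div_le_div_of_nonneg_left hc (neg_pos.2 (Real.log_neg (ha.trans_le hab) hb))
      (neg_le_neg (Real.log_le_log ha hab))

theorem tendsto_neg_log_nhdsGT_zero : Tendsto (fun ε => -Real.log ε) (𝓝[>] 0) atTop :=
  tendsto_neg_atBot_atTop.comp Real.tendsto_log_nhdsGT_zero

theorem eventually_lt_one_nhdsGT_zero : ∀ᶠ ε in 𝓝[>] (0 : ℝ), ε < 1 :=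
  mem_of_superset (Ioo_mem_nhdsGT one_pos) fun _ h => h.2

section QuantDim

variable {E : Type*} [MetricSpace E] [MeasurableSpace E] (P : Measure E)
  [IsProbabilityMeasure P] {r : ℝ} {K : Set E}

theorem log_div_neg_log_quantError_le (hr : 0 < r) (hK : IsCompact K) (hPK : P Kᶜ = 0)
    {ε : ℝ} (hε : 0 < ε) (hε1 : ε < 1) {n : ℕ} (hn : coverNum K ε ≤ n) :
    Real.log n / -Real.log (quantError P r n) ≤ Real.log n / -Real.log ε :=
  div_neg_log_le_div_neg_log (Real.log_natCast_nonneg n) (quantError_nonneg P r n)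
    (quantError_le_of_coverNum_le P hr hK hPK hε hn) hε1

theorem eventually_log_div_neg_log_quantError_nonneg (hr : 0 < r) (hK : IsCompact K)
    (hPK : P Kᶜ = 0) : ∀ᶠ n : ℕ in atTop, 0 ≤ Real.log n / -Real.log (quantError P r n) := by
  filter_upwards [eventually_ge_atTop (coverNum K (1 / 2))] with n hn
  have he := quantError_le_of_coverNum_le P hr hK hPK one_half_pos hn
  exact div_nonneg (Real.log_natCast_nonneg n)
    (neg_nonneg.2 (Real.log_nonpos (quantError_nonneg P r n) (by linarith)))

theorem upperQuantDim_le_upperBoxDim (hr : 0 < r) (hK : IsCompact K) (hPK : P Kᶜ = 0)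
    (hbdd : IsBoundedUnder (· ≤ ·) (𝓝[>] 0)
      fun ε => Real.log (coverNum K ε) / -Real.log ε) :
    upperQuantDim P r ≤ upperBoxDim K := by
  have hne := nonempty_of_measure_compl_eq_zero P hPK
  refine le_of_forall_gt_imp_ge_of_dense fun s hs => ?_
  have hs0 : 0 < s := (le_limsup_of_frequently_le
    (eventually_log_coverNum_div_neg_log_nonneg hK hne).frequently hbdd).trans_lt hs
  have hsmall : ∀ᶠ ε in 𝓝[>] 0, Real.log (coverNum K ε) < s * -Real.log ε ∧ ε < 1 := by
    filter_upwards [eventually_lt_of_limsup_lt hs hbdd, eventually_lt_one_nhdsGT_zero,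
      self_mem_nhdsWithin] with ε hεs hε1 hε0
    exact ⟨(div_lt_iff₀ (neg_pos.2 (Real.log_neg hε0 hε1))).1 hεs, hε1⟩
  -- `ε = n ^ (-1 / s)`, the radius at which `n` balls suffice once `N(K, ε) < ε ^ (-s)`
  have hradius : Tendsto (fun n : ℕ => Real.exp (-(Real.log n / s))) atTop (𝓝[>] 0) :=
    Real.tendsto_exp_atBot_nhdsGT.comp <| tendsto_neg_atTop_atBot.comp <|
      (Real.tendsto_log_atTop.comp tendsto_natCast_atTop_atTop).atTop_div_const hs0
  refine limsup_le_of_le (isCoboundedUnder_le_of_eventually_le _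
    (eventually_log_div_neg_log_quantError_nonneg P hr hK hPK)) ?_
  filter_upwards [hradius.eventually hsmall, eventually_ge_atTop 2] with n ⟨hN, hε1⟩ hn
  set ε := Real.exp (-(Real.log n / s))
  have hlogn : 0 < Real.log n := Real.log_pos (by exact_mod_cast hn)
  have hlogε : -Real.log ε = Real.log n / s := by simp [ε]
  have hNn : coverNum K ε ≤ n := by
    rw [hlogε, mul_div_cancel₀ _ hs0.ne',
      Real.log_lt_log_iff (by exact_mod_cast one_le_coverNum hK hne (Real.exp_pos _))
        (by positivity)] at hN
    exact_mod_cast hN.le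
  calc Real.log n / -Real.log (quantError P r n) ≤ Real.log n / -Real.log ε :=
        log_div_neg_log_quantError_le P hr hK hPK (Real.exp_pos _) hε1 hNn
    _ = s := by rw [hlogε]; field_simp

theorem lowerQuantDim_le_lowerBoxDim (hr : 0 < r) (hK : IsCompact K) (hPK : P Kᶜ = 0)
    (hbdd : IsBoundedUnder (· ≤ ·) (𝓝[>] 0)
      fun ε => Real.log (coverNum K ε) / -Real.log ε) :
    lowerQuantDim P r ≤ lowerBoxDim K := by
  have hne := nonempty_of_measure_compl_eq_zero P hPK
  refine le_of_forall_gt_imp_ge_of_dense fun s hs => ?_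
  have hs0 : 0 < s := (le_liminf_of_le hbdd.isCoboundedUnder_ge
    (eventually_log_coverNum_div_neg_log_nonneg hK hne)).trans_lt hs
  refine liminf_le_of_frequently_le (frequently_atTop.2 fun m => ?_)
    ⟨0, eventually_log_div_neg_log_quantError_nonneg P hr hK hPK⟩
  have hlarge : ∀ᶠ ε in 𝓝[>] 0, Real.log m < s * -Real.log ε := by
    filter_upwards [tendsto_neg_log_nhdsGT_zero.eventually_gt_atTop (Real.log m / s)] with ε hε
    rwa [div_lt_iff₀' hs0] at hε
  obtain ⟨ε, hεs, hεm, hε1, hε0⟩ :=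
    ((frequently_lt_of_liminf_lt hbdd.isCoboundedUnder_ge hs).and_eventually
      (hlarge.and (eventually_lt_one_nhdsGT_zero.and self_mem_nhdsWithin))).exists
  have hlogε : 0 < -Real.log ε := neg_pos.2 (Real.log_neg hε0 hε1)
  refine ⟨max m (coverNum K ε), le_max_left _ _, ?_⟩
  calc _ ≤ Real.log (max m (coverNum K ε) : ℕ) / -Real.log ε :=
        log_div_neg_log_quantError_le P hr hK hPK hε0 hε1 (le_max_right _ _)
    _ ≤ s := by
      rw [div_le_iff₀ hlogε]
      rcases max_choice m (coverNum K ε) with h | h <;> rw [h]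
      · exact hεm.le
      · exact ((div_lt_iff₀ hlogε).1 hεs).le

end QuantDim

theorem exists_finset_card_le_closedBall_subset_iUnion_closedBall (q : ℕ) {R ε : ℝ}
    (hR : 0 ≤ R) (hε : 0 < ε) :
    ∃ t : Finset (EuclideanSpace ℝ (Fin q)), (t.card : ℝ) ≤ (2 * R * (q + 1) / ε + 3) ^ q ∧
      closedBall 0 R ⊆ ⋃ x ∈ t, closedBall x ε := by
  -- every point lies within `√q * c ≤ ε` of the cubic grid of mesh `c`
  set c := ε / (q + 1) with hc
  have hc0 : 0 < c := by positivity
  set N := ⌈R / c⌉₊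
  set grid : (Fin q → ℤ) → EuclideanSpace ℝ (Fin q) := fun z => WithLp.toLp 2 fun i => c * z i
  refine ⟨(Fintype.piFinset fun _ => Finset.Icc (-N : ℤ) N).image grid, ?_, ?_⟩
  · have hN : (N : ℝ) ≤ R / c + 1 := (Nat.ceil_lt_add_one (by positivity)).le
    calc _ ≤ ((Fintype.piFinset fun _ : Fin q => Finset.Icc (-N : ℤ) N).card : ℝ) := by
          exact_mod_cast Finset.card_image_le
      _ = (2 * N + 1 : ℝ) ^ q := by
          rw [Fintype.card_piFinset, Finset.prod_const, Finset.card_univ, Fintype.card_fin,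
            Int.card_Icc, show ((N : ℤ) + 1 - -N).toNat = 2 * N + 1 by omega]
          push_cast
          rfl
      _ ≤ _ := by
          gcongr ?_ ^ _
          calc (2 * N + 1 : ℝ) ≤ 2 * (R / c + 1) + 1 := by linarith
            _ = _ := by rw [hc]; field_simp; ring
  · intro x hx
    rw [mem_closedBall, dist_zero_right] at hx
    have hcoord : ∀ i, |x i / c| ≤ N := fun i => by
      rw [abs_div, abs_of_pos hc0]
      exact (div_le_div_of_nonneg_right ((PiLp.norm_apply_le x i).trans hx) hc0.le).trans
        (Nat.le_ceil _)
    refine Set.mem_iUnion₂.2 ⟨grid fun i => ⌊x i / c⌋, Finset.mem_image_of_mem _ ?_, ?_⟩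
    · refine Fintype.mem_piFinset.2 fun i => Finset.mem_Icc.2 ⟨?_, ?_⟩
      · exact Int.le_floor.2 (by push_cast; linarith [neg_abs_le (x i / c), hcoord i])
      · rw [Int.floor_le_iff]
        push_cast
        linarith [le_abs_self (x i / c), hcoord i]
    · have hcell : ∀ i, dist (x i) (c * ⌊x i / c⌋) ≤ c := fun i => by
        rw [Real.dist_eq, show x i - c * ⌊x i / c⌋ = c * Int.fract (x i / c) by
          rw [Int.fract]; field_simp, abs_of_nonneg (by positivity)]
        exact mul_le_of_le_one_right hc0.le (Int.fract_lt_one _).le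
      rw [mem_closedBall, EuclideanSpace.dist_eq, Real.sqrt_le_left hε.le]
      calc ∑ i, dist (x i) (c * ⌊x i / c⌋) ^ 2 ≤ ∑ _i : Fin q, c ^ 2 :=
            Finset.sum_le_sum fun i _ => pow_le_pow_left₀ dist_nonneg (hcell i) 2
        _ = q * c ^ 2 := by simp
        _ ≤ (q + 1) ^ 2 * c ^ 2 := by gcongr; nlinarith
        _ = ε ^ 2 := by rw [hc]; field_simp

theorem isBoundedUnder_log_coverNum_div_neg_log {q : ℕ} {K : Set (EuclideanSpace ℝ (Fin q))}
    (hK : Bornology.IsBounded K) :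
    IsBoundedUnder (· ≤ ·) (𝓝[>] 0) fun ε => Real.log (coverNum K ε) / -Real.log ε := by
  obtain ⟨R, hR, hKR⟩ := hK.subset_closedBall_lt 0 0
  set A : ℝ := 2 * R * (q + 1) + 3
  have hlogA : 0 ≤ Real.log A := Real.log_nonneg (by simp only [A]; nlinarith)
  refine ⟨q * (Real.log A + 1), eventually_map.2 ?_⟩
  filter_upwards [tendsto_neg_log_nhdsGT_zero.eventually_ge_atTop 1,
    eventually_lt_one_nhdsGT_zero, self_mem_nhdsWithin] with ε hlogε hε1 (hε0 : 0 < ε)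
  obtain ⟨t, ht, hRt⟩ := exists_finset_card_le_closedBall_subset_iUnion_closedBall q hR.le hε0
  have hN : (coverNum K ε : ℝ) ≤ (A / ε) ^ q := by
    calc (coverNum K ε : ℝ) ≤ t.card := by exact_mod_cast coverNum_le_card t (hKR.trans hRt)
      _ ≤ (2 * R * (q + 1) / ε + 3) ^ q := ht
      _ ≤ (A / ε) ^ q := by
          refine pow_le_pow_left₀ (by positivity) ?_ q
          rw [add_div]
          gcongr
          rw [le_div_iff₀ hε0]
          linarith
  rw [div_le_iff₀ (by linarith)]
  rcases (Nat.cast_nonneg (α := ℝ) (coverNum K ε)).eq_or_lt with h | h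
  · rw [← h, Real.log_zero]
    positivity
  calc Real.log (coverNum K ε) ≤ Real.log ((A / ε) ^ q) := Real.log_le_log h hN
    _ = q * (Real.log A + -Real.log ε) := by
        rw [Real.log_pow, Real.log_div (by positivity) hε0.ne']
        ring
    _ ≤ q * (Real.log A + 1) * -Real.log ε := by
        nlinarith [mul_le_mul_of_nonneg_left hlogε (mul_nonneg q.cast_nonneg hlogA)]

theorem quantDim_le_boxDim_general (q : ℕ) (r : ℝ) (hr : 0 < r)
    (μ : Measure (EuclideanSpace ℝ (Fin q))) [IsProbabilityMeasure μ]
    (K : Set (EuclideanSpace ℝ (Fin q))) (hKc : IsCompact K)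
    (hμK : μ Kᶜ = 0) :
    lowerQuantDim μ r ≤ lowerBoxDim K ∧ upperQuantDim μ r ≤ upperBoxDim K :=
  have hbdd := isBoundedUnder_log_coverNum_div_neg_log hKc.isBounded
  ⟨lowerQuantDim_le_lowerBoxDim μ hr hKc hμK hbdd, upperQuantDim_le_upperBoxDim μ hr hKc hμK hbdd⟩

/-- for a Borel probability measure `μ` on `ℝ^q` with compact support `K`
(the smallest closed set of full measure), the lower quantization dimension is bounded by the
lower box dimension of `K` and the upper quantization dimension by the upper box dimension
of `K`. -/
theorem quantDim_le_boxDim (q : ℕ) (r : ℝ) (hr : 0 < r)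
    (μ : Measure (EuclideanSpace ℝ (Fin q))) [IsProbabilityMeasure μ]
    (K : Set (EuclideanSpace ℝ (Fin q))) (hKc : IsCompact K) (hKcl : IsClosed K)
    (hμK : μ Kᶜ = 0)
    (hmin : ∀ F : Set (EuclideanSpace ℝ (Fin q)), IsClosed F → μ Fᶜ = 0 → K ⊆ F) :
    lowerQuantDim μ r ≤ lowerBoxDim K ∧ upperQuantDim μ r ≤ upperBoxDim K :=
  quantDim_le_boxDim_general q r hr μ K hKc hμK
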